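/- Suppose the atom poset A has top ⊤ and bottom ⊥, and let S be a non-empty set of games over A. Define ↑S = ⟨[⊤] | ⟨S | [⊥]⟩⟩. Then S ≤_L ↑S and ↑S ≤_L S (each member of S is left equivalent to ↑S), and ↑S is the maximal element with respect to ≤ in the left equivalence class of S: for every game T with T ≤_L S and S ≤_L T, we have T ≤ ↑S. -/
import Mathlib


inductive Game (A : Type) : Type 1 where
  | atom : A → Game A
  | comp : (ι κ : Type) → (ι → Game A) → (κ → Game A) → Nonempty ι → Nonempty κ → Game A

namespace Game

variable {A : Type}

/-- `G.IsAtom` holds iff `G` is an atomic game. -/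
def IsAtom : Game A → Prop
  | atom _ => True
  | comp _ _ _ _ _ _ => False

/-- `G.IsLeftOption x`: `x` is a left option of `G`. -/
def IsLeftOption : Game A → Game A → Prop
  | atom _, _ => False
  | comp _ _ L _ _ _, x => ∃ i, L i = x

/-- `G.IsRightOption y`: `y` is a right option of `G`. -/
def IsRightOption : Game A → Game A → Prop
  | atom _, _ => False
  | comp _ _ _ R _ _, x => ∃ j, R j = x

section Ord

variable [PartialOrder A]

mutual
  /-- The order relation `G ≤ H` on games over a poset. -/
  inductive Le : Game A → Game A → Prop
    | mk : ∀ {G H : Game A},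
        (∀ x, G.IsLeftOption x → Tri x H) →
        (∀ y, H.IsRightOption y → Tri G y) →
        ((G.IsAtom ∨ H.IsAtom) → Tri G H) →
        Le G H
  /-- The relation `G ◁ H` on games over a poset. -/
  inductive Tri : Game A → Game A → Prop
    | ofRight : ∀ {G H y : Game A}, G.IsRightOption y → Le y H → Tri G H
    | ofLeft : ∀ {G H x : Game A}, H.IsLeftOption x → Le G x → Tri G H
    | ofAtom : ∀ {a b : A}, a ≤ b → Tri (Game.atom a) (Game.atom b)
end

/-- Equivalence of games: `G ≤ H` and `H ≤ G`. -/
def Equiv (G H : Game A) : Prop := Le G H ∧ Le H G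

/-- A game is monotone if all of its options are good, and recursively all
options are monotone. -/
inductive Monotone : Game A → Prop
  | mk : ∀ {G : Game A},
      (∀ x, G.IsLeftOption x → Le G x) →
      (∀ y, G.IsRightOption y → Le y G) →
      (∀ x, G.IsLeftOption x → Monotone x) →
      (∀ y, G.IsRightOption y → Monotone y) →
      Monotone G

/-- A game is passable if `G ◁ G` and recursively all options are passable. -/
inductive Passable : Game A → Prop
  | mk : ∀ {G : Game A}, Tri G G →
      (∀ x, G.IsLeftOption x → Passable x) →
      (∀ y, G.IsRightOption y → Passable y) →
      Passable G

end Ord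

end Game


namespace Game

variable {A : Type} [PartialOrder A]

private theorem atom_no_left {a : A} {x : Game A} (h : (Game.atom a).IsLeftOption x)
    {C : Prop} : C := h.elim

private theorem atom_no_right {a : A} {x : Game A} (h : (Game.atom a).IsRightOption x)
    {C : Prop} : C := h.elim

private theorem le_tri_top [OrderTop A] (G : Game A) :
    Le G (Game.atom (⊤ : A)) ∧ Tri G (Game.atom (⊤ : A)) := by
  induction G with
  | atom a =>
    exact ⟨Le.mk (fun x hx => atom_no_left hx) (fun y hy => atom_no_right hy)
      (fun _ => Tri.ofAtom le_top), Tri.ofAtom le_top⟩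
  | comp ι κ L R hι hκ ihL ihR =>
    obtain ⟨j⟩ := id hκ
    have ht : Tri (Game.comp ι κ L R hι hκ) (Game.atom (⊤ : A)) :=
      Tri.ofRight ⟨j, rfl⟩ (ihR j).1
    exact ⟨Le.mk (fun x hx => by obtain ⟨i, rfl⟩ := hx; exact (ihL i).2)
      (fun y hy => atom_no_right hy) (fun _ => ht), ht⟩

private theorem bot_le_tri [OrderBot A] (G : Game A) :
    Le (Game.atom (⊥ : A)) G ∧ Tri (Game.atom (⊥ : A)) G := by
  induction G with
  | atom a =>
    exact ⟨Le.mk (fun x hx => atom_no_left hx) (fun y hy => atom_no_right hy)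
      (fun _ => Tri.ofAtom bot_le), Tri.ofAtom bot_le⟩
  | comp ι κ L R hι hκ ihL ihR =>
    obtain ⟨i⟩ := id hι
    have ht : Tri (Game.atom (⊥ : A)) (Game.comp ι κ L R hι hκ) :=
      Tri.ofLeft ⟨i, rfl⟩ (ihL i).1
    exact ⟨Le.mk (fun x hx => atom_no_left hx)
      (fun y hy => by obtain ⟨j, rfl⟩ := hy; exact (ihR j).2) (fun _ => ht), ht⟩

private theorem le_refl' (G : Game A) : Le G G := by
  induction G with
  | atom a =>
    exact Le.mk (fun x hx => atom_no_left hx) (fun y hy => atom_no_right hy)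
      (fun _ => Tri.ofAtom le_rfl)
  | comp ι κ L R hι hκ ihL ihR =>
    exact Le.mk (fun x hx => by obtain ⟨i, rfl⟩ := hx; exact Tri.ofLeft ⟨i, rfl⟩ (ihL i))
      (fun y hy => by obtain ⟨j, rfl⟩ := hy; exact Tri.ofRight ⟨j, rfl⟩ (ihR j))
      (fun h => h.elim (fun h => h.elim) (fun h => h.elim))

/-- Two games with the same options (and same atom value, if atomic). -/
def SameOpt (G G' : Game A) : Prop :=
  (∀ x, G.IsLeftOption x ↔ G'.IsLeftOption x) ∧
  (∀ y, G.IsRightOption y ↔ G'.IsRightOption y) ∧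
  (∀ a : A, G = Game.atom a ↔ G' = Game.atom a)

theorem SameOpt.refl' (G : Game A) : SameOpt G G :=
  ⟨fun _ => Iff.rfl, fun _ => Iff.rfl, fun _ => Iff.rfl⟩

private theorem isAtom_iff {G : Game A} : G.IsAtom ↔ ∃ a, G = Game.atom a := by
  cases G with
  | atom a => exact ⟨fun _ => ⟨a, rfl⟩, fun _ => trivial⟩
  | comp ι κ L R hι hκ => exact ⟨fun h => h.elim, fun ⟨a, h⟩ => by cases h⟩

private theorem tri_congr {G H : Game A} (h : Tri G H) :
    ∀ {G' H'}, SameOpt G G' → SameOpt H H' → Tri G' H' := by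
  refine Game.Tri.rec
    (motive_1 := fun G H _ => ∀ {G' H' : Game A}, SameOpt G G' → SameOpt H H' → Le G' H')
    (motive_2 := fun G H _ => ∀ {G' H' : Game A}, SameOpt G G' → SameOpt H H' → Tri G' H')
    ?_ ?_ ?_ ?_ h
  · intro G H a1 a2 a3 ih1 ih2 ih3 G' H' sG sH
    refine Le.mk (fun x hx => ih1 x ((sG.1 x).mpr hx) (SameOpt.refl' x) sH)
      (fun y hy => ih2 y ((sH.2.1 y).mpr hy) sG (SameOpt.refl' y)) (fun hat => ?_)
    refine ih3 ?_ sG sH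
    rcases hat with hat | hat
    · obtain ⟨a, rfl⟩ := isAtom_iff.mp hat
      exact Or.inl (isAtom_iff.mpr ⟨a, (sG.2.2 a).mpr rfl⟩)
    · obtain ⟨a, rfl⟩ := isAtom_iff.mp hat
      exact Or.inr (isAtom_iff.mpr ⟨a, (sH.2.2 a).mpr rfl⟩)
  · intro G H y hy hle ih G' H' sG sH
    exact Tri.ofRight ((sG.2.1 y).mp hy) (ih (SameOpt.refl' y) sH)
  · intro G H x hx hle ih G' H' sG sH
    exact Tri.ofLeft ((sH.1 x).mp hx) (ih sG (SameOpt.refl' x))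
  · intro a b hab G' H' sG sH
    rw [(sG.2.2 a).mp rfl, (sH.2.2 b).mp rfl]
    exact Tri.ofAtom hab

end Game

/-- With top `⊤` and bottom `⊥`, for a non-empty set of games `S`, the game
`↑S = ⟨[⊤] | ⟨S | [⊥]⟩⟩` is left equivalent to `S`, and is the maximal element
with respect to `≤` in the left equivalence class of `S`. -/
theorem Game.upl_maximal {A : Type} [PartialOrder A] [OrderTop A] [OrderBot A]
    (σ : Type) (hσ : Nonempty σ) (S : σ → Game A) :
    let upS : Game A := Game.comp Unit Unit (fun _ => Game.atom ⊤)
      (fun _ => Game.comp σ Unit S (fun _ => Game.atom ⊥) hσ ⟨()⟩) ⟨()⟩ ⟨()⟩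
    -- S ≤_L ↑S
    (∀ (ιL ιR : Type) (L : ιL → Game A) (hR : Nonempty ιR) (R : ιR → Game A),
        Game.Le (Game.comp (σ ⊕ ιL) ιR (Sum.elim S L) R (hσ.map Sum.inl) hR)
                (Game.comp (Unit ⊕ ιL) ιR (Sum.elim (fun _ => upS) L) R ⟨Sum.inl ()⟩ hR)) ∧
    -- ↑S ≤_L S
    (∀ (ιL ιR : Type) (L : ιL → Game A) (hR : Nonempty ιR) (R : ιR → Game A),
        Game.Le (Game.comp (Unit ⊕ ιL) ιR (Sum.elim (fun _ => upS) L) R ⟨Sum.inl ()⟩ hR)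
                (Game.comp (σ ⊕ ιL) ιR (Sum.elim S L) R (hσ.map Sum.inl) hR)) ∧
    -- maximality: any T left equivalent to S satisfies T ≤ ↑S
    (∀ T : Game A,
      (∀ (ιL ιR : Type) (L : ιL → Game A) (hR : Nonempty ιR) (R : ιR → Game A),
        Game.Le (Game.comp (Unit ⊕ ιL) ιR (Sum.elim (fun _ => T) L) R ⟨Sum.inl ()⟩ hR)
                (Game.comp (σ ⊕ ιL) ιR (Sum.elim S L) R (hσ.map Sum.inl) hR)) →
      (∀ (ιL ιR : Type) (L : ιL → Game A) (hR : Nonempty ιR) (R : ιR → Game A),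
        Game.Le (Game.comp (σ ⊕ ιL) ιR (Sum.elim S L) R (hσ.map Sum.inl) hR)
                (Game.comp (Unit ⊕ ιL) ιR (Sum.elim (fun _ => T) L) R ⟨Sum.inl ()⟩ hR)) →
      Game.Le T upS) := by
  intro upS
  have hSup : ∀ s : σ, Le (S s) upS := by
    intro s
    refine Le.mk (fun x _ => Tri.ofLeft ⟨(), rfl⟩ (le_tri_top x).1) (fun y hy => ?_)
      (fun _ => Tri.ofLeft ⟨(), rfl⟩ (le_tri_top (S s)).1)
    obtain ⟨j, rfl⟩ := hy
    exact Tri.ofLeft ⟨s, rfl⟩ (le_refl' (S s))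
  refine ⟨?_, ?_, ?_⟩
  · -- S ≤_L ↑S
    intro ιL ιR L hR R
    refine Le.mk (fun x hx => ?_) (fun y hy => ?_) (fun h => h.elim (fun h => h.elim) (fun h => h.elim))
    · obtain ⟨i, rfl⟩ := hx
      cases i with
      | inl s => exact Tri.ofLeft ⟨Sum.inl (), rfl⟩ (hSup s)
      | inr i => exact Tri.ofLeft ⟨Sum.inr i, rfl⟩ (le_refl' (L i))
    · obtain ⟨j, rfl⟩ := hy
      exact Tri.ofRight ⟨j, rfl⟩ (le_refl' (R j))
  · -- ↑S ≤_L S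
    intro ιL ιR L hR R
    refine Le.mk (fun x hx => ?_) (fun y hy => ?_) (fun h => h.elim (fun h => h.elim) (fun h => h.elim))
    · obtain ⟨i, rfl⟩ := hx
      cases i with
      | inl u =>
        refine Tri.ofRight ⟨(), rfl⟩ ?_
        refine Le.mk (fun x hx => ?_) (fun y hy => ?_) (fun h => h.elim (fun h => h.elim) (fun h => h.elim))
        · obtain ⟨s, rfl⟩ := hx
          exact Tri.ofLeft ⟨Sum.inl s, rfl⟩ (le_refl' (S s))
        · obtain ⟨j, rfl⟩ := hy
          exact Tri.ofRight ⟨(), rfl⟩ (bot_le_tri (R j)).1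
      | inr i => exact Tri.ofLeft ⟨Sum.inr i, rfl⟩ (le_refl' (L i))
    · obtain ⟨j, rfl⟩ := hy
      exact Tri.ofRight ⟨j, rfl⟩ (le_refl' (R j))
  · -- maximality
    intro T h1 _h2
    have key := h1 Empty Unit (fun e => e.elim) ⟨()⟩ (fun _ => Game.atom (⊥ : A))
    have trT : Tri T (Game.comp (σ ⊕ Empty) Unit (Sum.elim S (fun e => e.elim))
        (fun _ => Game.atom (⊥ : A)) (hσ.map Sum.inl) ⟨()⟩) := by
      cases key with
      | mk a1 a2 a3 => exact a1 T ⟨Sum.inl (), rfl⟩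
    have trT' : Tri T (Game.comp σ Unit S (fun _ => Game.atom (⊥ : A)) hσ ⟨()⟩) := by
      refine tri_congr trT (SameOpt.refl' T) ⟨fun x => ?_, fun y => Iff.rfl, fun a => ?_⟩
      · constructor
        · rintro ⟨i, rfl⟩
          cases i with
          | inl s => exact ⟨s, rfl⟩
          | inr e => exact e.elim
        · rintro ⟨s, rfl⟩
          exact ⟨Sum.inl s, rfl⟩
      · exact Iff.intro (fun h => by cases h) (fun h => by cases h)
    refine Le.mk (fun x _ => Tri.ofLeft ⟨(), rfl⟩ (le_tri_top x).1) (fun y hy => ?_)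
      (fun _ => Tri.ofLeft ⟨(), rfl⟩ (le_tri_top T).1)
    obtain ⟨j, rfl⟩ := hy
    exact trT'
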